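/- Let A, B ∈ M_{k×ℓ}(F_q) and let ⟨L(A)⟩, ⟨L(B)⟩ be the row spaces of (I_k | A) and (I_k | B) in F_q^{k+ℓ}. Then the subspace distance d_S(⟨L(A)⟩, ⟨L(B)⟩) = 2·rank(A − B). -/

import Mathlib

/-- The row space of the lifted matrix (I_k | A), a subspace of F^{k+ℓ}. -/
def matLift {F : Type} [Field F] {k ℓ : ℕ} (A : Matrix (Fin k) (Fin ℓ) F) :
    Submodule F (Fin (k + ℓ) → F) :=
  Submodule.span F
    (Set.range fun i : Fin k => Fin.append ((1 : Matrix (Fin k) (Fin k) F) i) (A i))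

/-- The subspace distance d_S(U,V) = dim U + dim V - 2 dim(U ⊓ V). -/
noncomputable def subspaceDist {F : Type} [Field F] {n : ℕ}
    (U V : Submodule F (Fin n → F)) : ℕ :=
  Module.finrank F U + Module.finrank F V -
    2 * Module.finrank F (U ⊓ V : Submodule F (Fin n → F))

/-! A vector `x` is sent by `(I_k | A)` to `(x | x ᵥ* A)`, so `matLift A` is the range of that
map; two such vectors `(x | x ᵥ* A)` and `(y | y ᵥ* B)` coincide iff `x = y` and
`x ᵥ* (A - B) = 0`. Hence `matLift A ⊓ matLift B` is isomorphic to the left kernel of `A - B`,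
of dimension `k - rank (A - B)` by rank–nullity, while both row spaces have dimension `k`. -/

open Matrix Module

theorem Fin.append_inj {α : Type*} {m n : ℕ} {a c : Fin m → α} {b d : Fin n → α} :
    Fin.append a b = Fin.append c d ↔ a = c ∧ b = d := by
  refine ⟨fun h => ⟨funext fun i => ?_, funext fun i => ?_⟩, fun ⟨hac, hbd⟩ => hac ▸ hbd ▸ rfl⟩
  · simpa using congrFun h (Fin.castAdd n i)
  · simpa using congrFun h (Fin.natAdd m i)

theorem Matrix.finrank_ker_vecMulLinear_add_rank {F m n : Type*} [Field F] [Fintype m]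
    [Fintype n] (M : Matrix m n F) :
    finrank F (LinearMap.ker M.vecMulLinear) + M.rank = Fintype.card m := by
  rw [← rank_transpose, rank, mulVecLin_transpose, add_comm,
    LinearMap.finrank_range_add_finrank_ker, finrank_fintype_fun_eq_card]

section liftMap

variable {R : Type*} [CommSemiring R] {k ℓ : ℕ}

def liftMap (A : Matrix (Fin k) (Fin ℓ) R) : (Fin k → R) →ₗ[R] (Fin (k + ℓ) → R) where
  toFun x := Fin.append x (x ᵥ* A)
  map_add' x y := by
    funext i
    refine Fin.addCases (fun i => ?_) (fun i => ?_) i <;> simp [add_vecMul]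
  map_smul' c x := by
    funext i
    refine Fin.addCases (fun i => ?_) (fun i => ?_) i <;> simp [smul_vecMul]

theorem liftMap_apply (A : Matrix (Fin k) (Fin ℓ) R) (x : Fin k → R) :
    liftMap A x = Fin.append x (x ᵥ* A) := rfl

theorem liftMap_eq_liftMap_iff {A B : Matrix (Fin k) (Fin ℓ) R} {x y : Fin k → R} :
    liftMap A x = liftMap B y ↔ x = y ∧ x ᵥ* A = y ᵥ* B := by
  rw [liftMap_apply, liftMap_apply, Fin.append_inj]

theorem liftMap_injective (A : Matrix (Fin k) (Fin ℓ) R) : Function.Injective (liftMap A) :=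
  fun _ _ h => (liftMap_eq_liftMap_iff.mp h).1

end liftMap

section matLift

variable {F : Type} [Field F] {k ℓ : ℕ}

theorem range_liftMap (A : Matrix (Fin k) (Fin ℓ) F) : LinearMap.range (liftMap A) = matLift A := by
  classical
  rw [matLift, ← Submodule.map_top, ← (Pi.basisFun F (Fin k)).span_eq, Submodule.map_span,
    ← Set.range_comp]
  congr 2
  funext i
  rw [Function.comp_apply, Pi.basisFun_apply, liftMap_apply, single_one_vecMul]
  congr 1
  funext j
  simp [one_apply, Pi.single_apply, eq_comm]

theorem finrank_matLift (A : Matrix (Fin k) (Fin ℓ) F) : finrank F (matLift A) = k := by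
  rw [← range_liftMap, LinearMap.finrank_range_of_inj (liftMap_injective A),
    finrank_fin_fun]

theorem matLift_inf_matLift (A B : Matrix (Fin k) (Fin ℓ) F) :
    matLift A ⊓ matLift B = (LinearMap.ker (A - B).vecMulLinear).map (liftMap A) := by
  ext v
  simp only [← range_liftMap, Submodule.mem_inf, LinearMap.mem_range, Submodule.mem_map,
    LinearMap.mem_ker, vecMulLinear_apply, vecMul_sub, sub_eq_zero]
  constructor
  · rintro ⟨⟨x, rfl⟩, y, hyx⟩
    obtain ⟨rfl, hAB⟩ := liftMap_eq_liftMap_iff.mp hyx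
    exact ⟨y, hAB.symm, rfl⟩
  · rintro ⟨x, hAB, rfl⟩
    exact ⟨⟨x, rfl⟩, x, liftMap_eq_liftMap_iff.mpr ⟨rfl, hAB.symm⟩⟩

theorem finrank_matLift_inf_add_rank (A B : Matrix (Fin k) (Fin ℓ) F) :
    finrank F (matLift A ⊓ matLift B : Submodule F (Fin (k + ℓ) → F)) + (A - B).rank = k := by
  rw [matLift_inf_matLift, ← (Submodule.equivMapOfInjective _ (liftMap_injective A) _).finrank_eq,
    finrank_ker_vecMulLinear_add_rank, Fintype.card_fin]

end matLift

/-- d_S(⟨L(A)⟩, ⟨L(B)⟩) = 2 · rank(A - B). -/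
theorem stmt_11 (F : Type) [Field F] (k ℓ : ℕ) (A B : Matrix (Fin k) (Fin ℓ) F) :
    subspaceDist (matLift A) (matLift B) = 2 * (A - B).rank := by
  have hinf := finrank_matLift_inf_add_rank A B
  rw [subspaceDist, finrank_matLift, finrank_matLift]
  omega
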